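/- In the construction embedding bounded 1-marginal (r,c,h)-arrays into (3, rc, r+c+h)-arrays, if y is a nonnegative real array satisfying the constructed 2-marginals and x is defined by x_{i,j,k} := y_{1,ij,dom k}, then x satisfies 0 ≤ x_{i,j,k} ≤ p_{i,j,k} for all i,j,k, and its 1-marginals equal the prescribed values u_{i,+,+}, u_{+,j,+}, u_{+,+,k}. -/

import Mathlib

/-- `U = min (max_i u1 i) (max_j u2 j)` of the Theorem 1.4 construction. -/
def bigU (r c : ℕ) (u1 : Fin r → ℕ) (u2 : Fin c → ℕ) : ℕ :=
  min (Finset.univ.sup u1) (Finset.univ.sup u2)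

open Sum in
/-- `v_{+,ij,gro k}` of the Theorem 1.4 construction. -/
def margA (r c h : ℕ) (u1 : Fin r → ℕ) (u2 : Fin c → ℕ)
    (p : Fin r → Fin c → Fin h → ℕ) :
    Fin r × Fin c → (Fin h ⊕ Fin r ⊕ Fin c) → ℝ := fun a g =>
  match g with
  | inl k => (p a.1 a.2 k : ℝ)
  | inr (inl i) => if i = a.1 then (bigU r c u1 u2 : ℝ) else 0
  | inr (inr j) => if j = a.2 then (bigU r c u1 u2 : ℝ) else 0

/-- `v_{t,ij,+}` of the Theorem 1.4 construction. -/
def margT (r c h : ℕ) (u1 : Fin r → ℕ) (u2 : Fin c → ℕ)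
    (p : Fin r → Fin c → Fin h → ℕ) :
    Fin 3 → Fin r × Fin c → ℝ := fun t a =>
  if t = 1 then ∑ k, (p a.1 a.2 k : ℝ) else (bigU r c u1 u2 : ℝ)

open Sum in
/-- `v_{t,+,gro k}` of the Theorem 1.4 construction. -/
def margG (r c h : ℕ) (u1 : Fin r → ℕ) (u2 : Fin c → ℕ) (u3 : Fin h → ℕ)
    (p : Fin r → Fin c → Fin h → ℕ) :
    Fin 3 → (Fin h ⊕ Fin r ⊕ Fin c) → ℝ := fun t g =>
  match g with
  | inl k => if t = 0 then (u3 k : ℝ)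
      else if t = 1 then (∑ i, ∑ j, (p i j k : ℝ)) - (u3 k : ℝ) else 0
  | inr (inl i) => if t = 0 then (c : ℝ) * (bigU r c u1 u2 : ℝ) - (u1 i : ℝ)
      else if t = 1 then 0 else (u1 i : ℝ)
  | inr (inr j) => if t = 0 then 0
      else if t = 1 then (u2 j : ℝ)
      else (r : ℝ) * (bigU r c u1 u2 : ℝ) - (u2 j : ℝ)

/-!
Layers `0, 1, 2` are the paper's layers 1, 2, 3, the black groups are the `inl k`, and
`x i j k = y 0 (i, j) (inl k)`. The zero entries of the constructed 2-marginals force a rigid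
shape: layer 2 has no black entries, layer 0 no column entries, layer 1 no row entries, and
cell `(i, j)` carries row weight only in group `i` and column weight only in group `j`.
Hence `y 0 + y 1 = p` on the black block, which gives `0 ≤ x ≤ p`. In layer 0 the black mass
of a cell plus its row-`i` entry is `U`; summing over `j` against the group marginal
`c U - u1 i` gives the row sums of `x`. In layer 1 the black mass plus the column-`j` entry is
`∑ k, p i j k`; summing over `i` against the group marginal `u2 j` gives the column sums of
`y 1`, hence of `x = p - y 1`. The third marginal is the layer-0 group marginal `u3 k` itself.
-/

open Sum

structure HasConstructedMargins (r c h : ℕ) (u1 : Fin r → ℕ) (u2 : Fin c → ℕ)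
    (u3 : Fin h → ℕ) (p : Fin r → Fin c → Fin h → ℕ)
    (y : Fin 3 → Fin r × Fin c → (Fin h ⊕ Fin r ⊕ Fin c) → ℝ) : Prop where
  nonneg : ∀ t a g, 0 ≤ y t a g
  sum_group : ∀ t a, ∑ g, y t a g = margT r c h u1 u2 p t a
  sum_cell : ∀ t g, ∑ a, y t a g = margG r c h u1 u2 u3 p t g
  sum_layer : ∀ a g, ∑ t, y t a g = margA r c h u1 u2 p a g

namespace HasConstructedMargins

variable {r c h : ℕ} {u1 : Fin r → ℕ} {u2 : Fin c → ℕ} {u3 : Fin h → ℕ}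
  {p : Fin r → Fin c → Fin h → ℕ} {y : Fin 3 → Fin r × Fin c → (Fin h ⊕ Fin r ⊕ Fin c) → ℝ}

theorem eq_zero_of_margG_eq_zero (hy : HasConstructedMargins r c h u1 u2 u3 p y)
    {t g} (hg : margG r c h u1 u2 u3 p t g = 0) (a : Fin r × Fin c) : y t a g = 0 :=
  congrFun ((Fintype.sum_eq_zero_iff_of_nonneg fun a => hy.nonneg t a g).1
    (hy.sum_cell t g ▸ hg)) a

theorem eq_zero_of_margA_eq_zero (hy : HasConstructedMargins r c h u1 u2 u3 p y)
    {a g} (hg : margA r c h u1 u2 p a g = 0) (t : Fin 3) : y t a g = 0 :=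
  congrFun ((Fintype.sum_eq_zero_iff_of_nonneg fun t => hy.nonneg t a g).1
    (hy.sum_layer a g ▸ hg)) t

theorem row_eq_zero_of_ne (hy : HasConstructedMargins r c h u1 u2 u3 p y) (t : Fin 3)
    {i i' : Fin r} (hi : i' ≠ i) (j : Fin c) : y t (i, j) (inr (inl i')) = 0 :=
  hy.eq_zero_of_margA_eq_zero (by simp [margA, hi]) t

theorem col_eq_zero_of_ne (hy : HasConstructedMargins r c h u1 u2 u3 p y) (t : Fin 3)
    (i : Fin r) {j j' : Fin c} (hj : j' ≠ j) : y t (i, j) (inr (inr j')) = 0 :=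
  hy.eq_zero_of_margA_eq_zero (by simp [margA, hj]) t

theorem black_layer_zero_add_layer_one (hy : HasConstructedMargins r c h u1 u2 u3 p y)
    (i : Fin r) (j : Fin c) (k : Fin h) :
    y 0 (i, j) (inl k) + y 1 (i, j) (inl k) = p i j k := by
  have hy2 : y 2 (i, j) (inl k) = 0 := hy.eq_zero_of_margG_eq_zero (by simp [margG]) _
  simpa [Fin.sum_univ_three, hy2, margA] using hy.sum_layer (i, j) (inl k)

theorem sum_black_add_row_self_layer_zero (hy : HasConstructedMargins r c h u1 u2 u3 p y)
    (i : Fin r) (j : Fin c) :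
    ∑ k, y 0 (i, j) (inl k) + y 0 (i, j) (inr (inl i)) = bigU r c u1 u2 := by
  have hrow : ∑ i', y 0 (i, j) (inr (inl i')) = y 0 (i, j) (inr (inl i)) :=
    Fintype.sum_eq_single i fun i' hi => hy.row_eq_zero_of_ne 0 hi j
  have hcol : ∑ j', y 0 (i, j) (inr (inr j')) = 0 :=
    Fintype.sum_eq_zero _ fun j' => hy.eq_zero_of_margG_eq_zero (by simp [margG]) _
  simpa [Fintype.sum_sum_type, hrow, hcol, margT] using hy.sum_group 0 (i, j)

theorem sum_black_add_col_self_layer_one (hy : HasConstructedMargins r c h u1 u2 u3 p y)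
    (i : Fin r) (j : Fin c) :
    ∑ k, y 1 (i, j) (inl k) + y 1 (i, j) (inr (inr j)) = ∑ k, (p i j k : ℝ) := by
  have hrow : ∑ i', y 1 (i, j) (inr (inl i')) = 0 :=
    Fintype.sum_eq_zero _ fun i' => hy.eq_zero_of_margG_eq_zero (by simp [margG]) _
  have hcol : ∑ j', y 1 (i, j) (inr (inr j')) = y 1 (i, j) (inr (inr j)) :=
    Fintype.sum_eq_single j fun j' hj => hy.col_eq_zero_of_ne 1 i hj
  simpa [Fintype.sum_sum_type, hrow, hcol, margT] using hy.sum_group 1 (i, j)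

theorem sum_row_self_layer_zero (hy : HasConstructedMargins r c h u1 u2 u3 p y) (i : Fin r) :
    ∑ j, y 0 (i, j) (inr (inl i)) = c * bigU r c u1 u2 - u1 i := by
  have h := hy.sum_cell 0 (inr (inl i))
  rw [Fintype.sum_prod_type, Fintype.sum_eq_single i
    fun i' hi => Fintype.sum_eq_zero _ fun j => hy.row_eq_zero_of_ne 0 hi.symm j] at h
  simpa [margG] using h

theorem sum_col_self_layer_one (hy : HasConstructedMargins r c h u1 u2 u3 p y) (j : Fin c) :
    ∑ i, y 1 (i, j) (inr (inr j)) = u2 j := by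
  have h := hy.sum_cell 1 (inr (inr j))
  rw [Fintype.sum_prod_type] at h
  simp_rw [Fintype.sum_eq_single j fun j' hj => hy.col_eq_zero_of_ne 1 _ hj.symm] at h
  simpa [margG] using h

theorem black_layer_zero_le (hy : HasConstructedMargins r c h u1 u2 u3 p y)
    (i : Fin r) (j : Fin c) (k : Fin h) : y 0 (i, j) (inl k) ≤ p i j k := by
  linarith [hy.black_layer_zero_add_layer_one i j k, hy.nonneg 1 (i, j) (inl k)]

theorem black_layer_zero_row_sum (hy : HasConstructedMargins r c h u1 u2 u3 p y) (i : Fin r) :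
    ∑ j, ∑ k, y 0 (i, j) (inl k) = u1 i := by
  have h : ∑ j, (∑ k, y 0 (i, j) (inl k) + y 0 (i, j) (inr (inl i))) = c * bigU r c u1 u2 := by
    simp [hy.sum_black_add_row_self_layer_zero i]
  rw [Finset.sum_add_distrib, hy.sum_row_self_layer_zero i] at h
  linarith

theorem black_layer_zero_col_sum (hy : HasConstructedMargins r c h u1 u2 u3 p y) (j : Fin c) :
    ∑ i, ∑ k, y 0 (i, j) (inl k) = u2 j := by
  have h1 : ∑ i, (∑ k, y 1 (i, j) (inl k) + y 1 (i, j) (inr (inr j))) =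
      ∑ i, ∑ k, (p i j k : ℝ) :=
    Finset.sum_congr rfl fun i _ => hy.sum_black_add_col_self_layer_one i j
  have h01 : ∑ i, ∑ k, y 0 (i, j) (inl k) + ∑ i, ∑ k, y 1 (i, j) (inl k) =
      ∑ i, ∑ k, (p i j k : ℝ) := by
    simp_rw [← Finset.sum_add_distrib, hy.black_layer_zero_add_layer_one]
  rw [Finset.sum_add_distrib, hy.sum_col_self_layer_one j] at h1
  linarith

theorem black_layer_zero_group_sum (hy : HasConstructedMargins r c h u1 u2 u3 p y) (k : Fin h) :
    ∑ i, ∑ j, y 0 (i, j) (inl k) = u3 k := by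
  simpa [Fintype.sum_prod_type, margG] using hy.sum_cell 0 (inl k)

end HasConstructedMargins

open Sum in
theorem black_block_feasible (r c h : ℕ)
    (u1 : Fin r → ℕ) (u2 : Fin c → ℕ) (u3 : Fin h → ℕ)
    (p : Fin r → Fin c → Fin h → ℕ)
    (y : Fin 3 → Fin r × Fin c → (Fin h ⊕ Fin r ⊕ Fin c) → ℝ)
    (hnn : ∀ t a g, 0 ≤ y t a g)
    (hT : ∀ t a, ∑ g, y t a g = margT r c h u1 u2 p t a)
    (hG : ∀ t g, ∑ a, y t a g = margG r c h u1 u2 u3 p t g)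
    (hA : ∀ a g, ∑ t, y t a g = margA r c h u1 u2 p a g) :
    (∀ i j k, 0 ≤ y 0 (i, j) (inl k)) ∧
    (∀ i j k, y 0 (i, j) (inl k) ≤ (p i j k : ℝ)) ∧
    (∀ i, ∑ j, ∑ k, y 0 (i, j) (inl k) = (u1 i : ℝ)) ∧
    (∀ j, ∑ i, ∑ k, y 0 (i, j) (inl k) = (u2 j : ℝ)) ∧
    (∀ k, ∑ i, ∑ j, y 0 (i, j) (inl k) = (u3 k : ℝ)) := by
  have hy : HasConstructedMargins r c h u1 u2 u3 p y := ⟨hnn, hT, hG, hA⟩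
  exact ⟨fun i j k => hnn 0 (i, j) (inl k), hy.black_layer_zero_le, hy.black_layer_zero_row_sum,
    hy.black_layer_zero_col_sum, hy.black_layer_zero_group_sum⟩
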